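/- (Asymptotically flat corollary of Theorem 1, reduced null-coordinate form.) Let d ≥ 2 be an integer, k a real constant, U ⊆ ℝ² open, and f, r : U → ℝ twice continuously differentiable with r > 0 on U. Suppose T₊₊, T₋₋, T₊₋ : U → ℝ satisfy the reduced Einstein equations with vanishing cosmological constant: r·T±±/(d−1) = −(∂±f)(∂±r) − ∂±∂±r and r·T₊₋/(d−1) = ∂₊∂₋r + ((d−2)/r)[ (e^{−f}/2)·k + (∂₊r)(∂₋r) ], with T₊₊ ≥ 0, T₋₋ ≥ 0, T₊₋ ≥ 0 on U. Define μ = k r^{d−2} + 2 e^{f} r^{d−2} (∂₊r)(∂₋r). Let γ = (γ⁺, γ⁻) : [0,1] → U be continuously differentiable with (γ⁺)′ ≥ 0 and (γ⁻)′ ≤ 0, with ∂₊r ≥ 0 and ∂₋r ≤ 0 along γ, and with ∂₊r(γ(0)) = 0. Then μ(γ(1)) ≥ k·r(γ(0))^{d−2}. -/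

import Mathlib

/-!
Along a curve with `(γ⁺)′ ≥ 0 ≥ (γ⁻)′` in the untrapped region the Misner–Sharp mass is
nondecreasing: by the reduced Einstein equations its derivative along the curve is
`2 e^f r^(d-1) / (d-1) · [(γ⁺)′ (T₊₋ ∂₊r - T₊₊ ∂₋r) + (γ⁻)′ (T₊₋ ∂₋r - T₋₋ ∂₊r)]`,
and every term in the bracket is nonnegative under the sign conditions and the energy
condition. At the marginally trapped start `∂₊r = 0`, so there the mass equals `k r^(d-2)`.
-/

/-- Partial derivative in the `x⁺` (first coordinate) direction. -/
noncomputable def dplus (g : ℝ × ℝ → ℝ) (x : ℝ × ℝ) : ℝ := fderiv ℝ g x (1, 0)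

/-- Partial derivative in the `x⁻` (second coordinate) direction. -/
noncomputable def dminus (g : ℝ × ℝ → ℝ) (x : ℝ × ℝ) : ℝ := fderiv ℝ g x (0, 1)

open Real Set

theorem fderiv_apply_pair (g : ℝ × ℝ → ℝ) (x : ℝ × ℝ) (a b : ℝ) :
    fderiv ℝ g x (a, b) = a * dplus g x + b * dminus g x := by
  have hab : ((a, b) : ℝ × ℝ) = a • ((1 : ℝ), (0 : ℝ)) + b • ((0 : ℝ), (1 : ℝ)) := by simp
  rw [hab, map_add, map_smul, map_smul, smul_eq_mul, smul_eq_mul, dplus, dminus]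

theorem DifferentiableAt.hasDerivWithinAt_comp_pair {g : ℝ × ℝ → ℝ} {c : ℝ → ℝ × ℝ}
    {a b t : ℝ} {s : Set ℝ} (hg : DifferentiableAt ℝ g (c t))
    (hc : HasDerivWithinAt c (a, b) s t) :
    HasDerivWithinAt (fun τ => g (c τ)) (a * dplus g (c t) + b * dminus g (c t)) s t := by
  have h := hg.hasFDerivAt.comp_hasDerivWithinAt t hc
  rwa [fderiv_apply_pair] at h

theorem ContDiffAt.differentiableAt_dplus {r : ℝ × ℝ → ℝ} {x : ℝ × ℝ}
    (hr : ContDiffAt ℝ 2 r x) : DifferentiableAt ℝ (dplus r) x :=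
  ((hr.fderiv_right (m := 1) (by norm_num)).differentiableAt one_ne_zero).clm_apply
    (differentiableAt_const _)

theorem ContDiffAt.differentiableAt_dminus {r : ℝ × ℝ → ℝ} {x : ℝ × ℝ}
    (hr : ContDiffAt ℝ 2 r x) : DifferentiableAt ℝ (dminus r) x :=
  ((hr.fderiv_right (m := 1) (by norm_num)).differentiableAt one_ne_zero).clm_apply
    (differentiableAt_const _)

theorem ContDiffAt.dminus_dplus {r : ℝ × ℝ → ℝ} {x : ℝ × ℝ} (hr : ContDiffAt ℝ 2 r x) :
    dminus (dplus r) x = dplus (dminus r) x := by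
  have hr' := (hr.fderiv_right (m := 1) (by norm_num)).differentiableAt one_ne_zero
  change fderiv ℝ (fun y => fderiv ℝ r y (1, 0)) x (0, 1)
    = fderiv ℝ (fun y => fderiv ℝ r y (0, 1)) x (1, 0)
  rw [fderiv_clm_apply hr' (differentiableAt_const _),
    fderiv_clm_apply hr' (differentiableAt_const _)]
  simpa using hr.isSymmSndFDerivAt (by simp) (0, 1) (1, 0)

noncomputable def misnerSharpMass (n : ℕ) (k : ℝ) (f r : ℝ × ℝ → ℝ) (x : ℝ × ℝ) : ℝ :=
  k * r x ^ n + 2 * exp (f x) * r x ^ n * dplus r x * dminus r x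

structure IsReducedEinsteinAt (d : ℕ) (k : ℝ) (f r Tpp Tmm Tpm : ℝ × ℝ → ℝ) (x : ℝ × ℝ) :
    Prop where
  plus_plus : r x * Tpp x / ((d : ℝ) - 1) = -(dplus f x) * dplus r x - dplus (dplus r) x
  minus_minus : r x * Tmm x / ((d : ℝ) - 1) = -(dminus f x) * dminus r x - dminus (dminus r) x
  plus_minus : r x * Tpm x / ((d : ℝ) - 1) =
    dplus (dminus r) x + (((d : ℝ) - 2) / r x) * (exp (-(f x)) / 2 * k + dplus r x * dminus r x)

noncomputable def massFlux (d : ℕ) (f r Tpp Tmm Tpm : ℝ × ℝ → ℝ) (a b : ℝ) (x : ℝ × ℝ) : ℝ :=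
  2 * exp (f x) * r x ^ (d - 1) / ((d : ℝ) - 1) *
    (a * (Tpm x * dplus r x - Tpp x * dminus r x) + b * (Tpm x * dminus r x - Tmm x * dplus r x))

theorem hasDerivWithinAt_misnerSharpMass_comp {d : ℕ} (hd : 2 ≤ d) {k : ℝ}
    {f r Tpp Tmm Tpm : ℝ × ℝ → ℝ} {c : ℝ → ℝ × ℝ} {a b t : ℝ} {s : Set ℝ}
    (hf : ContDiffAt ℝ 2 f (c t)) (hr : ContDiffAt ℝ 2 r (c t)) (hr0 : r (c t) ≠ 0)
    (hE : IsReducedEinsteinAt d k f r Tpp Tmm Tpm (c t)) (hc : HasDerivWithinAt c (a, b) s t) :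
    HasDerivWithinAt (fun τ => misnerSharpMass (d - 2) k f r (c τ))
      (massFlux d f r Tpp Tmm Tpm a b (c t)) s t := by
  obtain ⟨n, rfl⟩ : ∃ n, d = n + 2 := ⟨d - 2, by omega⟩
  have hR := (hr.differentiableAt two_ne_zero).hasDerivWithinAt_comp_pair hc
  have hF := (hf.differentiableAt two_ne_zero).hasDerivWithinAt_comp_pair hc
  have hP := hr.differentiableAt_dplus.hasDerivWithinAt_comp_pair hc
  have hM := hr.differentiableAt_dminus.hasDerivWithinAt_comp_pair hc
  refine (((hR.pow n).const_mul k).add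
    ((((hF.exp.const_mul 2).mul (hR.pow n)).mul hP).mul hM)).congr_deriv ?_
  set x := c t
  have hpow : (n : ℝ) * r x ^ (n - 1) = n * r x ^ n * (r x)⁻¹ := by
    cases n with
    | zero => simp
    | succ m => field_simp; simp [pow_succ]
  have hexp : exp (f x) * (exp (f x))⁻¹ = 1 := mul_inv_cancel₀ (exp_pos _).ne'
  obtain ⟨hpp, hmm, hpm⟩ := hE
  simp only [Pi.mul_apply, Pi.pow_apply, massFlux, hr.dminus_dplus, hpow, exp_neg] at hpp hmm hpm ⊢
  push_cast at hpp hmm hpm ⊢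
  -- Each Einstein equation eliminates one second derivative of `r`; `hexp` then cancels the
  -- `k` terms, which enter through `e^(-f)` in the mixed equation.
  linear_combination (2 * exp (f x) * r x ^ n * a * dminus r x) * hpp
    + (2 * exp (f x) * r x ^ n * b * dplus r x) * hmm
    - (2 * exp (f x) * r x ^ n * (a * dplus r x + b * dminus r x)) * hpm
    - (k * n * r x ^ n * (r x)⁻¹ * (a * dplus r x + b * dminus r x)) * hexp

theorem massFlux_nonneg {d : ℕ} (hd : 1 ≤ d) {f r Tpp Tmm Tpm : ℝ × ℝ → ℝ} {a b : ℝ}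
    {x : ℝ × ℝ} (hr : 0 ≤ r x) (ha : 0 ≤ a) (hb : b ≤ 0)
    (hP : 0 ≤ dplus r x) (hM : dminus r x ≤ 0)
    (hTpp : 0 ≤ Tpp x) (hTmm : 0 ≤ Tmm x) (hTpm : 0 ≤ Tpm x) :
    0 ≤ massFlux d f r Tpp Tmm Tpm a b x := by
  have hd1 : (0 : ℝ) ≤ (d : ℝ) - 1 := sub_nonneg.2 (by exact_mod_cast hd)
  have hplus : 0 ≤ a * (Tpm x * dplus r x - Tpp x * dminus r x) :=
    mul_nonneg ha (by nlinarith)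
  have hminus : 0 ≤ b * (Tpm x * dminus r x - Tmm x * dplus r x) :=
    mul_nonneg_of_nonpos_of_nonpos hb (by nlinarith)
  unfold massFlux
  positivity

theorem Convex.monotoneOn_of_hasDerivWithinAt_nonneg {D : Set ℝ} (hD : Convex ℝ D)
    {g g' : ℝ → ℝ} (hg : ∀ t ∈ D, HasDerivWithinAt g (g' t) D t) (hg' : ∀ t ∈ D, 0 ≤ g' t) :
    MonotoneOn g D :=
  _root_.monotoneOn_of_hasDerivWithinAt_nonneg hD (fun t ht => (hg t ht).continuousWithinAt)
    (fun t ht => (hg t (interior_subset ht)).mono interior_subset)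
    (fun t ht => hg' t (interior_subset ht))

theorem penrose_inequality_asymptotically_flat_reduced
    (d : ℕ) (hd : 2 ≤ d) (k : ℝ)
    (U : Set (ℝ × ℝ)) (hU : IsOpen U)
    (f r : ℝ × ℝ → ℝ)
    (hf : ContDiffOn ℝ 2 f U) (hr : ContDiffOn ℝ 2 r U)
    (hrpos : ∀ x ∈ U, 0 < r x)
    (Tpp Tmm Tpm : ℝ × ℝ → ℝ)
    (hEpp : ∀ x ∈ U, r x * Tpp x / ((d : ℝ) - 1) =
      -(dplus f x) * dplus r x - dplus (dplus r) x)
    (hEmm : ∀ x ∈ U, r x * Tmm x / ((d : ℝ) - 1) =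
      -(dminus f x) * dminus r x - dminus (dminus r) x)
    (hEpm : ∀ x ∈ U, r x * Tpm x / ((d : ℝ) - 1) =
      dplus (dminus r) x + (((d : ℝ) - 2) / r x) *
        (Real.exp (-(f x)) / 2 * k + dplus r x * dminus r x))
    (hTppnn : ∀ x ∈ U, 0 ≤ Tpp x) (hTmmnn : ∀ x ∈ U, 0 ≤ Tmm x)
    (hTpmnn : ∀ x ∈ U, 0 ≤ Tpm x)
    (μ : ℝ × ℝ → ℝ)
    (hμ : ∀ x, μ x = k * r x ^ (d - 2)
      + 2 * Real.exp (f x) * r x ^ (d - 2) * dplus r x * dminus r x)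
    (γp γm : ℝ → ℝ)
    (hγmem : ∀ t ∈ Set.Icc (0 : ℝ) 1, (γp t, γm t) ∈ U)
    (hγC1 : ContDiffOn ℝ 1 (fun t => (γp t, γm t)) (Set.Icc (0 : ℝ) 1))
    (hγp' : ∀ t ∈ Set.Icc (0 : ℝ) 1, 0 ≤ derivWithin γp (Set.Icc (0 : ℝ) 1) t)
    (hγm' : ∀ t ∈ Set.Icc (0 : ℝ) 1, derivWithin γm (Set.Icc (0 : ℝ) 1) t ≤ 0)
    (huntrapped : ∀ t ∈ Set.Icc (0 : ℝ) 1,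
      0 ≤ dplus r (γp t, γm t) ∧ dminus r (γp t, γm t) ≤ 0)
    (hmarg : dplus r (γp 0, γm 0) = 0) :
    μ (γp 1, γm 1) ≥ k * r (γp 0, γm 0) ^ (d - 2) := by
  set I := Icc (0 : ℝ) 1
  have hcurve (t : ℝ) (ht : t ∈ I) : HasDerivWithinAt (fun τ => (γp τ, γm τ))
      (derivWithin γp I t, derivWithin γm I t) I t := by
    have h := (hγC1.differentiableOn one_ne_zero) t ht
    exact h.fst.hasDerivWithinAt.prodMk h.snd.hasDerivWithinAt
  have hmass (t : ℝ) (ht : t ∈ I) :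
      HasDerivWithinAt (fun τ => misnerSharpMass (d - 2) k f r (γp τ, γm τ))
        (massFlux d f r Tpp Tmm Tpm (derivWithin γp I t) (derivWithin γm I t) (γp t, γm t))
        I t := by
    have hx := hγmem t ht
    exact hasDerivWithinAt_misnerSharpMass_comp hd (hf.contDiffAt (hU.mem_nhds hx))
      (hr.contDiffAt (hU.mem_nhds hx)) (hrpos _ hx).ne' ⟨hEpp _ hx, hEmm _ hx, hEpm _ hx⟩
      (hcurve t ht)
  have hmono := (convex_Icc (0 : ℝ) 1).monotoneOn_of_hasDerivWithinAt_nonneg hmass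
    fun t ht => massFlux_nonneg (one_le_two.trans hd) (hrpos _ (hγmem t ht)).le (hγp' t ht) (hγm' t ht)
      (huntrapped t ht).1 (huntrapped t ht).2 (hTppnn _ (hγmem t ht))
      (hTmmnn _ (hγmem t ht)) (hTpmnn _ (hγmem t ht))
  have h01 := hmono (left_mem_Icc.2 zero_le_one) (right_mem_Icc.2 zero_le_one) zero_le_one
  rw [hμ]
  simpa [misnerSharpMass, hmarg] using h01
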